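/- arXiv:2010.03989 — 4 statements merged into one kernel-verified Lean document; each statement's English description precedes it below -/
import Mathlib

section
/- Every finitely generated commutative ring R that is elementarily equivalent to ℤ in the first-order language of rings is isomorphic to ℤ. -/
open FirstOrder Language Matrix

/-- The first-order language of groups: a binary function symbol (multiplication),
a unary function symbol (inversion), and a constant symbol (identity). -/
def grpLang : FirstOrder.Language :=
  ⟨fun n => match n with
    | 0 => Unit
    | 1 => Unit
    | 2 => Unit
    | _ => Empty,
   fun _ => Empty⟩

/-- The natural interpretation of the language of groups in a group. -/
def grpStructure (G : Type*) [Group G] : grpLang.Structure G where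
  funMap {n} f v :=
    match n, f, v with
    | 0, _, _ => 1
    | 1, _, v => (v 0)⁻¹
    | 2, _, v => v 0 * v 1
    | (_ + 3), f, _ => f.elim
  RelMap := fun {_} r => r.elim

/-- Two groups are elementarily equivalent in the first-order language of groups. -/
def GroupElemEquiv (G : Type*) (H : Type*) [Group G] [Group H] : Prop :=
  letI := grpStructure G
  letI := grpStructure H
  G ≅[grpLang] H

/-- Two rings are elementarily equivalent in the first-order language of rings. -/
def RingElemEquiv (R : Type*) (S : Type*) [Ring R] [Ring S] : Prop :=
  letI := FirstOrder.Ring.compatibleRingOfRing R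
  letI := FirstOrder.Ring.compatibleRingOfRing S
  R ≅[Language.ring] S

/-!
No zero divisors, "the only units are `±1`", "any two elements have a common divisor that is a
linear combination of them" and, for each prime number `p`, "`p` is irreducible" are first-order
sentences true in `ℤ`, hence in `R`. A finitely generated Bézout domain is noetherian, hence a
principal ideal domain and a unique factorization domain. If `q` is a prime of `R`, then `R ⧸ (q)`
is a field that is finitely generated as a ring, hence finite by Zariski's lemma over the Jacobson
ring `ℤ`; so `q` divides a prime number `p`, and as `p` is irreducible in `R`, `q = ±p`. Thus every
element of `R`, being `±` a product of primes, is an integer, and `ℤ → R` is bijective because no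
prime number vanishes in `R`.
-/

instance Int.isJacobsonRing : IsJacobsonRing ℤ := by
  refine isJacobsonRing_iff_prime_eq.mpr fun P hP => ?_
  by_cases hP0 : P = ⊥
  · subst hP0
    refine le_antisymm (fun x hx => Ideal.mem_bot.mpr ?_) Ideal.le_jacobson
    rcases Int.isUnit_iff.mp (Ideal.mem_jacobson_bot.mp hx x) with h | h <;>
      nlinarith [mul_self_nonneg x]
  · have := IsPrime.to_maximal_ideal hP0
    exact Ideal.jacobson_eq_self_of_isMaximal

section

variable {R : Type*} [CommRing R]

theorem Algebra.finiteType_int_of_subring_closure_eq_top {s : Finset R}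
    (hs : Subring.closure (s : Set R) = ⊤) : Algebra.FiniteType ℤ R :=
  ⟨⟨s, by rw [Algebra.adjoin_int, hs]; rfl⟩⟩

theorem Ideal.IsMaximal.exists_prime_natCast_mem [Algebra.FiniteType ℤ R] (m : Ideal R)
    [m.IsMaximal] : ∃ p : ℕ, p.Prime ∧ (p : R) ∈ m := by
  let := Ideal.Quotient.field m
  have : Algebra.FiniteType ℤ (R ⧸ m) :=
    .of_surjective (Ideal.Quotient.mkₐ ℤ m) (Ideal.Quotient.mkₐ_surjective ℤ m)
  have : Module.Finite ℤ (R ⧸ m) := finite_of_finite_type_of_isJacobsonRing ℤ (R ⧸ m)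
  rcases CharP.char_is_prime_or_zero (R ⧸ m) (ringChar (R ⧸ m)) with hp | h0
  · refine ⟨ringChar (R ⧸ m), hp, Ideal.Quotient.eq_zero_iff_mem.mp ?_⟩
    rw [map_natCast]
    exact ringChar.Nat.cast_ringChar
  · -- in characteristic zero, `R ⧸ m` would be a field integral over its subring `ℤ`
    have : CharZero (R ⧸ m) := (CharP.ringChar_zero_iff_CharZero _).mp h0
    exact (Int.not_isField (isField_of_isIntegral_of_isField (algebraMap ℤ (R ⧸ m)).injective_int
      (Field.toIsField _))).elim

theorem isBezout_iff_exists_combination_dvd :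
    IsBezout R ↔ ∀ x y : R, ∃ u v : R, u * x + v * y ∣ x ∧ u * x + v * y ∣ y := by
  refine ⟨fun _ x y => ?_, fun H => IsBezout.iff_span_pair_isPrincipal.mpr fun x y => ?_⟩
  · obtain ⟨u, v, h⟩ := IsBezout.gcd_eq_sum x y
    exact ⟨u, v, h ▸ IsBezout.gcd_dvd_left x y, h ▸ IsBezout.gcd_dvd_right x y⟩
  · obtain ⟨u, v, hx, hy⟩ := H x y
    refine ⟨u * x + v * y, le_antisymm ?_ ?_⟩
    · simp [Ideal.span_le, Set.insert_subset_iff, Ideal.mem_span_singleton, hx, hy]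
    · exact Ideal.span_singleton_le_iff_mem _ |>.mpr (Ideal.mem_span_pair.mpr ⟨u, v, rfl⟩)

theorem charZero_of_irreducible_natCast [IsDomain R]
    (hirr : ∀ p : ℕ, p.Prime → Irreducible (p : R)) : CharZero R := by
  rcases CharP.char_is_prime_or_zero R (ringChar R) with hp | h0
  · exact absurd (ringChar.Nat.cast_ringChar (R := R) ▸ hirr _ hp) not_irreducible_zero
  · exact (CharP.ringChar_zero_iff_CharZero _).mp h0

theorem Prime.exists_intCast_eq [IsDomain R] [IsBezout R] [Algebra.FiniteType ℤ R]
    (hunit : ∀ u : R, IsUnit u → u = 1 ∨ u = -1) (hirr : ∀ p : ℕ, p.Prime → Irreducible (p : R))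
    {q : R} (hq : Prime q) : ∃ n : ℤ, (n : R) = q := by
  have := Algebra.FiniteType.isNoetherianRing ℤ R
  have := PrincipalIdealRing.isMaximal_of_irreducible hq.irreducible
  obtain ⟨p, hp, hqp⟩ := Ideal.IsMaximal.exists_prime_natCast_mem (Ideal.span {q})
  obtain ⟨u, hu⟩ := hq.irreducible.associated_of_dvd (hirr p hp) (Ideal.mem_span_singleton.mp hqp)
  rcases hunit u u.isUnit with h | h
  · exact ⟨p, by simpa [h] using hu.symm⟩
  · exact ⟨-p, by simp [← hu, h]⟩

theorem Int.cast_surjective_of_irreducible_natCast [IsDomain R] [IsBezout R]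
    [Algebra.FiniteType ℤ R] (hunit : ∀ u : R, IsUnit u → u = 1 ∨ u = -1)
    (hirr : ∀ p : ℕ, p.Prime → Irreducible (p : R)) : Function.Surjective (Int.cast : ℤ → R) := by
  have := Algebra.FiniteType.isNoetherianRing ℤ R
  intro x
  induction x using UniqueFactorizationMonoid.induction_on_prime with
  | h₁ => exact ⟨0, Int.cast_zero⟩
  | h₂ u hu =>
    rcases hunit u hu with rfl | rfl
    exacts [⟨1, Int.cast_one⟩, ⟨-1, by simp⟩]
  | h₃ x q _ hq ih =>
    obtain ⟨n, rfl⟩ := hq.exists_intCast_eq hunit hirr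
    obtain ⟨m, rfl⟩ := ih
    exact ⟨n * m, Int.cast_mul n m⟩

theorem nonempty_ringEquiv_int_of_irreducible_natCast [NoZeroDivisors R] [IsBezout R]
    [Algebra.FiniteType ℤ R] (hunit : ∀ u : R, IsUnit u → u = 1 ∨ u = -1)
    (hirr : ∀ p : ℕ, p.Prime → Irreducible (p : R)) : Nonempty (R ≃+* ℤ) := by
  have : Nontrivial R := nontrivial_of_ne _ _ (hirr 2 Nat.prime_two).ne_one
  have : IsDomain R := NoZeroDivisors.to_isDomain R
  have := charZero_of_irreducible_natCast hirr
  exact ⟨(RingEquiv.ofBijective (Int.castRingHom R)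
    ⟨Int.cast_injective, Int.cast_surjective_of_irreducible_natCast hunit hirr⟩).symm⟩

end

namespace FirstOrder.Ring

noncomputable def natCastTerm (α : Type*) (n : ℕ) : Language.ring.Term α :=
  termOfFreeCommRing (n : FreeCommRing α)

variable {R : Type*} [CommRing R] [CompatibleRing R]

@[simp]
theorem realize_natCastTerm {α : Type*} (n : ℕ) (v : α → R) :
    (natCastTerm α n).realize v = n := by
  simp [natCastTerm]

def noZeroDivisorsSentence : Language.ring.Sentence :=
  ∀' ∀' ((((&0 : Language.ring.Term (Empty ⊕ Fin 2)) * &1) =' 0) ⟹ ((&0 =' 0) ⊔ (&1 =' 0)))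

def unitsSentence : Language.ring.Sentence :=
  ∀' ∀' ((((&0 : Language.ring.Term (Empty ⊕ Fin 2)) * &1) =' 1) ⟹ ((&0 =' 1) ⊔ (&0 =' (-1))))

def bezoutSentence : Language.ring.Sentence :=
  ∀' ∀' ∃' ∃' ((∃' ((&0 : Language.ring.Term (Empty ⊕ Fin 5)) =' ((&2 * &0 + &3 * &1) * &4))) ⊓
    (∃' ((&1 : Language.ring.Term (Empty ⊕ Fin 5)) =' ((&2 * &0 + &3 * &1) * &4))))

noncomputable def irreducibleNatCastSentence (n : ℕ) : Language.ring.Sentence :=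
  ∼(∃' ((natCastTerm _ n * &0) =' 1)) ⊓
    ∀' ∀' ((natCastTerm _ n =' (&0 * &1)) ⟹
      ((∃' (((&0 : Language.ring.Term (Empty ⊕ Fin 3)) * &2) =' 1)) ⊔ (∃' ((&1 * &2) =' 1))))

theorem realize_noZeroDivisorsSentence :
    R ⊨ noZeroDivisorsSentence ↔ NoZeroDivisors R := by
  simp [noZeroDivisorsSentence, Sentence.Realize, Formula.Realize, Fin.snoc, noZeroDivisors_iff]

theorem realize_unitsSentence :
    R ⊨ unitsSentence ↔ ∀ u : R, IsUnit u → u = 1 ∨ u = -1 := by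
  simp [unitsSentence, Sentence.Realize, Formula.Realize, Fin.snoc, isUnit_iff_exists_inv]

theorem realize_bezoutSentence : R ⊨ bezoutSentence ↔ IsBezout R := by
  simp [bezoutSentence, Sentence.Realize, Formula.Realize, Fin.snoc,
    isBezout_iff_exists_combination_dvd, dvd_def]

theorem realize_irreducibleNatCastSentence (n : ℕ) :
    R ⊨ irreducibleNatCastSentence n ↔ Irreducible (n : R) := by
  simp [irreducibleNatCastSentence, Sentence.Realize, Formula.Realize, Fin.snoc, irreducible_iff,
    isUnit_iff_exists_inv]

end FirstOrder.Ring

/-- **Elementary rigidity of `ℤ` among finitely generated commutative rings.**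
Every finitely generated commutative ring elementarily equivalent to `ℤ` in the
first-order language of rings is isomorphic to `ℤ`. -/
theorem int_elementary_rigidity
    (R : Type*) [CommRing R]
    (hfg : ∃ s : Finset R, Subring.closure (s : Set R) = ⊤)
    (h : RingElemEquiv R ℤ) :
    Nonempty (R ≃+* ℤ) := by
  open Ring in
  let := compatibleRingOfRing R
  let := compatibleRingOfRing ℤ
  have h : R ≅[Language.ring] ℤ := h
  have transfer {φ : Language.ring.Sentence} {P Q : Prop} (hR : R ⊨ φ ↔ P) (hZ : ℤ ⊨ φ ↔ Q)
      (hQ : Q) : P :=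
    hR.mp ((h.realize_sentence φ).mpr (hZ.mpr hQ))
  have : NoZeroDivisors R :=
    transfer realize_noZeroDivisorsSentence realize_noZeroDivisorsSentence inferInstance
  have : IsBezout R := transfer realize_bezoutSentence realize_bezoutSentence inferInstance
  obtain ⟨s, hs⟩ := hfg
  have := Algebra.finiteType_int_of_subring_closure_eq_top hs
  refine nonempty_ringEquiv_int_of_irreducible_natCast
    (transfer realize_unitsSentence realize_unitsSentence fun u => Int.isUnit_iff.mp) ?_
  exact fun p hp => transfer (realize_irreducibleNatCastSentence p)
    (realize_irreducibleNatCastSentence p) (Nat.prime_iff_prime_int.mp hp).irreducible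
end

section
/- Let L be a first-order language and let H₁ and H₂ be L-structures. Then H₁ and H₂ are logically equivalent (for every n and every set T of L-formulas in free variables x₁,…,xₙ, the logical radicals satisfy T^{LL}_{H₁} = T^{LL}_{H₂}) if and only if H₁ and H₂ are isotypic. -/
open FirstOrder Language

/-- The type of a tuple `a : Fin n → M` in an `L`-structure `M`: the set of all
first-order `L`-formulas in the free variables `x₁, …, xₙ` satisfied by `a` in `M`. -/
def typeOfTuple (L : FirstOrder.Language) {M : Type*} [L.Structure M] {n : ℕ}
    (a : Fin n → M) : Set (L.Formula (Fin n)) :=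
  {φ | φ.Realize a}

/-- Two `L`-structures are isotypic if every tuple in either of them has a tuple in the
other realizing exactly the same type. -/
def Isotypic (L : FirstOrder.Language) (M N : Type*) [L.Structure M] [L.Structure N] :
    Prop :=
  ∀ n : ℕ,
    (∀ a : Fin n → M, ∃ b : Fin n → N, typeOfTuple L a = typeOfTuple L b) ∧
    (∀ b : Fin n → N, ∃ a : Fin n → M, typeOfTuple L a = typeOfTuple L b)

/-- The logical radical `T^{LL}_H` of a set `T` of `L`-formulas in the free variables
`x₁, …, xₙ` with respect to an `L`-structure `H`: the set of all formulas satisfied by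
every assignment in `H` satisfying all formulas of `T`. -/
def logicalRadical (L : FirstOrder.Language) (H : Type*) [L.Structure H] {n : ℕ}
    (T : Set (L.Formula (Fin n))) : Set (L.Formula (Fin n)) :=
  {φ | ∀ v : Fin n → H, (∀ ψ ∈ T, ψ.Realize v) → φ.Realize v}

/-! The logical radical of `T` in `H` is the intersection of the types realized in `H` that
contain `T`, so it depends only on the set of realized types. Conversely, the radical of a
type `p` contains `⊥` exactly when nothing satisfies `p`, and a tuple satisfying `p` has type
`p` because types are closed under negation; so equal radicals force equal realized types. -/

section RealizedTypes

variable {L : FirstOrder.Language} {M N : Type*} [L.Structure M] [L.Structure N] {n : ℕ}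

variable (L M n) in
def realizedTypes : Set (Set (L.Formula (Fin n))) :=
  Set.range (typeOfTuple L : (Fin n → M) → Set (L.Formula (Fin n)))

theorem isotypic_iff_realizedTypes_eq :
    Isotypic L M N ↔ ∀ n, realizedTypes L M n = realizedTypes L N n := by
  simp only [Isotypic, Set.Subset.antisymm_iff, realizedTypes, Set.range_subset_iff,
    Set.mem_range, eq_comm]

theorem mem_logicalRadical_iff {T : Set (L.Formula (Fin n))} {φ : L.Formula (Fin n)} :
    φ ∈ logicalRadical L M T ↔ ∀ p ∈ realizedTypes L M n, T ⊆ p → φ ∈ p := by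
  simp only [realizedTypes, Set.forall_mem_range]
  rfl

theorem bot_notMem_logicalRadical_iff {T : Set (L.Formula (Fin n))} :
    ⊥ ∉ logicalRadical L M T ↔ ∃ v : Fin n → M, ∀ ψ ∈ T, ψ.Realize v := by
  simp [logicalRadical]

theorem typeOfTuple_eq_of_subset {a : Fin n → M} {b : Fin n → N}
    (h : typeOfTuple L a ⊆ typeOfTuple L b) : typeOfTuple L a = typeOfTuple L b := by
  refine h.antisymm fun φ hφ => ?_
  by_contra hna
  have hnb : φ.not ∈ typeOfTuple L b := h (Formula.realize_not.mpr hna)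
  exact Formula.realize_not.mp hnb hφ

theorem realizedTypes_subset_of_logicalRadical_eq
    (h : ∀ T : Set (L.Formula (Fin n)), logicalRadical L M T = logicalRadical L N T) :
    realizedTypes L M n ⊆ realizedTypes L N n := by
  rintro _ ⟨a, rfl⟩
  have ha : ⊥ ∉ logicalRadical L N (typeOfTuple L a) := by
    rw [← h, bot_notMem_logicalRadical_iff]
    exact ⟨a, fun _ => id⟩
  obtain ⟨b, hb⟩ := bot_notMem_logicalRadical_iff.mp ha
  exact ⟨b, (typeOfTuple_eq_of_subset hb).symm⟩

end RealizedTypes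

/-- **Logical equivalence coincides with isotypicity.**  Two `L`-structures `H₁` and `H₂`
are logically equivalent (all logical radicals with respect to `H₁` and `H₂` coincide)
if and only if they are isotypic. -/
theorem logicallyEquivalent_iff_isotypic
    (L : FirstOrder.Language) (H₁ H₂ : Type*) [L.Structure H₁] [L.Structure H₂] :
    (∀ (n : ℕ) (T : Set (L.Formula (Fin n))),
        logicalRadical L H₁ T = logicalRadical L H₂ T) ↔ Isotypic L H₁ H₂ := by
  rw [isotypic_iff_realizedTypes_eq]
  refine ⟨fun h n => ?_, fun h n T => ?_⟩
  · exact (realizedTypes_subset_of_logicalRadical_eq (h n)).antisymm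
      (realizedTypes_subset_of_logicalRadical_eq fun T => (h n T).symm)
  · ext φ
    simp only [mem_logicalRadical_iff, h n]
end

section
/- Let G be a finitely generated co-Hopfian group, i.e., every injective group endomorphism of G is surjective. Then G is isotypically rigid in the class of all groups: every group H that is isotypic to G is isomorphic to G. -/
open FirstOrder Language

/-- The type of a tuple `a : Fin n → G` in a group `G`: the set of all first-order
formulas in the language of groups, in free variables `x₁, …, xₙ`, satisfied by `a`. -/
def groupTypeOfTuple (G : Type*) [Group G] {n : ℕ} (a : Fin n → G) :
    Set (grpLang.Formula (Fin n)) :=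
  letI := grpStructure G
  {φ | φ.Realize a}

/-- Two groups are isotypic if every tuple in either of them has a tuple in the other
realizing exactly the same type in the first-order language of groups. -/
def GroupIsotypic (G H : Type*) [Group G] [Group H] : Prop :=
  ∀ n : ℕ,
    (∀ a : Fin n → G, ∃ b : Fin n → H, groupTypeOfTuple G a = groupTypeOfTuple H b) ∧
    (∀ b : Fin n → H, ∃ a : Fin n → G, groupTypeOfTuple G a = groupTypeOfTuple H b)

/-!
Fix a generating tuple `a` of `G` and a tuple `b` of `H` of the same type. Since every element
of `G` is the value of a term at `a`, and equalities between term values are part of the type,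
`t(a) ↦ t(b)` is a well-defined injective homomorphism `G →* H`; it is onto iff `b` generates `H`.
Given `y ∈ H`, pull the type of `(b, y)` back to a tuple `(a₀, x)` of `G`. Then `a₀` has the type
of `a`, so `t(a) ↦ t(a₀)` is an injective endomorphism of `G`, hence onto by co-Hopficity; thus
`a₀` generates `G`, so `x = t(a₀)` for some term `t`, and transferring this equation gives
`y = t(b)`.
-/

open FirstOrder Language Subgroup

attribute [local instance] grpStructure

section IsotypicRigidity

variable {G H : Type*} [Group G] [Group H]

theorem mem_closure_range_iff_exists_term_realize_eq {α : Type*} (a : α → G) (g : G) :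
    g ∈ closure (Set.range a) ↔ ∃ t : grpLang.Term α, t.realize a = g := by
  constructor
  · intro hg
    induction hg using closure_induction with
    | mem x hx =>
      obtain ⟨i, rfl⟩ := hx
      exact ⟨.var i, rfl⟩
    | one => exact ⟨.func (l := 0) () ![], rfl⟩
    | mul x y _ _ ihx ihy =>
      obtain ⟨t₁, rfl⟩ := ihx
      obtain ⟨t₂, rfl⟩ := ihy
      exact ⟨.func (l := 2) () ![t₁, t₂], rfl⟩
    | inv x _ ih =>
      obtain ⟨t, rfl⟩ := ih
      exact ⟨.func (l := 1) () ![t], rfl⟩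
  · rintro ⟨t, rfl⟩
    induction t with
    | var i => exact subset_closure (Set.mem_range_self i)
    | @func l f ts ih =>
      match l, f, ts, ih with
      | 0, _, _, _ => exact one_mem _
      | 1, _, _, ih => exact inv_mem (ih 0)
      | 2, _, _, ih => exact mul_mem (ih 0) (ih 1)
      | _ + 3, f, _, _ => exact f.elim

theorem MonoidHom.range_eq_closure_range_comp {ι : Type*} (f : G →* H) {a : ι → G}
    (ha : closure (Set.range a) = ⊤) : f.range = closure (Set.range (f ∘ a)) := by
  rw [f.range_eq_map, ← ha, MonoidHom.map_closure, Set.range_comp]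

variable {m : ℕ} {a : Fin m → G} {b : Fin m → H}

theorem realize_eq_iff_of_groupTypeOfTuple_eq (h : groupTypeOfTuple G a = groupTypeOfTuple H b)
    (t₁ t₂ : grpLang.Term (Fin m)) :
    t₁.realize a = t₂.realize a ↔ t₁.realize b = t₂.realize b := by
  simpa only [groupTypeOfTuple, Set.mem_ofPred_eq, Formula.realize_equal] using
    Set.ext_iff.mp h (t₁.equal t₂)

theorem groupTypeOfTuple_comp_eq_of_eq (h : groupTypeOfTuple G a = groupTypeOfTuple H b)
    {k : ℕ} (σ : Fin k → Fin m) :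
    groupTypeOfTuple G (a ∘ σ) = groupTypeOfTuple H (b ∘ σ) := by
  ext φ
  simpa only [groupTypeOfTuple, Set.mem_ofPred_eq, Formula.realize_relabel] using
    Set.ext_iff.mp h (φ.relabel σ)

theorem mem_closure_range_of_groupTypeOfTuple_eq
    (h : groupTypeOfTuple G a = groupTypeOfTuple H b) {k : ℕ} (σ : Fin k → Fin m) (i : Fin m)
    (hi : a i ∈ closure (Set.range (a ∘ σ))) : b i ∈ closure (Set.range (b ∘ σ)) := by
  obtain ⟨t, ht⟩ := (mem_closure_range_iff_exists_term_realize_eq _ _).mp hi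
  have hb : (t.relabel σ).realize b = (Term.var i).realize b :=
    (realize_eq_iff_of_groupTypeOfTuple_eq h _ _).mp (by rw [Term.realize_relabel, ht, Term.realize_var])
  rw [Term.realize_relabel, Term.realize_var] at hb
  exact (mem_closure_range_iff_exists_term_realize_eq _ _).mpr ⟨t, hb⟩

theorem exists_injective_comp_eq_of_groupTypeOfTuple_eq (ha : closure (Set.range a) = ⊤)
    (h : groupTypeOfTuple G a = groupTypeOfTuple H b) :
    ∃ f : G →* H, Function.Injective f ∧ f ∘ a = b := by
  have hterm (g : G) := (mem_closure_range_iff_exists_term_realize_eq a g).mp (ha ▸ mem_top g)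
  choose T hT using hterm
  have hT_realize (t : grpLang.Term (Fin m)) : (T (t.realize a)).realize b = t.realize b :=
    (realize_eq_iff_of_groupTypeOfTuple_eq h _ _).mp (hT _)
  refine ⟨MonoidHom.mk' (fun g => (T g).realize b) fun x y => ?_, fun x y hxy => ?_, ?_⟩
  · have hmul : (T ((T x).realize a * (T y).realize a)).realize b =
        (T x).realize b * (T y).realize b :=
      hT_realize (.func (l := 2) () ![T x, T y])
    rwa [hT, hT] at hmul
  · simpa only [hT] using (realize_eq_iff_of_groupTypeOfTuple_eq h (T x) (T y)).mpr hxy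
  · funext i
    exact hT_realize (.var i)

theorem closure_range_eq_top_of_groupTypeOfTuple_eq_of_coHopfian
    (hco : ∀ f : G →* G, Function.Injective f → Function.Surjective f)
    (ha : closure (Set.range a) = ⊤) {a₀ : Fin m → G}
    (h : groupTypeOfTuple G a = groupTypeOfTuple G a₀) : closure (Set.range a₀) = ⊤ := by
  obtain ⟨f, hf, rfl⟩ := exists_injective_comp_eq_of_groupTypeOfTuple_eq ha h
  rw [← f.range_eq_closure_range_comp ha, MonoidHom.range_eq_top]
  exact hco f hf

theorem closure_range_eq_top_of_groupIsotypic
    (hco : ∀ f : G →* G, Function.Injective f → Function.Surjective f)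
    (hGH : GroupIsotypic G H) (ha : closure (Set.range a) = ⊤)
    (hab : groupTypeOfTuple G a = groupTypeOfTuple H b) : closure (Set.range b) = ⊤ := by
  refine (eq_top_iff' _).mpr fun y => ?_
  obtain ⟨a', ha'⟩ := (hGH (m + 1)).2 (Fin.snoc b y)
  have hinit : groupTypeOfTuple G (a' ∘ Fin.castSucc) = groupTypeOfTuple H b := by
    simpa using groupTypeOfTuple_comp_eq_of_eq ha' Fin.castSucc
  have hgen := closure_range_eq_top_of_groupTypeOfTuple_eq_of_coHopfian hco ha
    (hab.trans hinit.symm)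
  simpa using mem_closure_range_of_groupTypeOfTuple_eq ha' Fin.castSucc (Fin.last m)
    (hgen ▸ mem_top _)

end IsotypicRigidity

/-- **Isotypic rigidity of finitely generated co-Hopfian groups.**  If `G` is a finitely
generated group all of whose injective endomorphisms are surjective, then every group
isotypic to `G` is isomorphic to `G`. -/
theorem coHopfian_isotypic_rigidity
    (G : Type*) [Group G] [Group.FG G]
    (hco : ∀ f : G →* G, Function.Injective f → Function.Surjective f)
    (H : Type*) [Group H] (h : GroupIsotypic G H) :
    Nonempty (G ≃* H) := by
  obtain ⟨S, hS, hSfin⟩ := Group.fg_iff.mp ‹Group.FG G›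
  obtain ⟨n, a, -, rfl⟩ := hSfin.fin_param
  obtain ⟨b, hab⟩ := (h n).1 a
  obtain ⟨φ, hφ, rfl⟩ := exists_injective_comp_eq_of_groupTypeOfTuple_eq hS hab
  refine ⟨MulEquiv.ofBijective φ ⟨hφ, ?_⟩⟩
  rw [← MonoidHom.range_eq_top, φ.range_eq_closure_range_comp hS]
  exact closure_range_eq_top_of_groupIsotypic hco h hS hab
end

section
/- Let G be a finitely presented Hopfian group, i.e., G admits a presentation with finitely many generators and finitely many relations, and every surjective group endomorphism of G is injective. Then G is isotypically rigid in the class of all groups: every group H that is isotypic to G is isomorphic to G. -/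
/-!
Let `a` be the generating tuple of a finite presentation `⟨a | R⟩` of `G`, and pick `b` in `H`
with the same type as `a`. Since "`w(x) = 1`" is a formula for every word `w`, the maps `w ↦ w(a)`
and `w ↦ w(b)` from the free group have the same kernel, so `G ≅ ⟨b⟩ ≤ H`, and it remains to see
that `b` generates `H`. Given `h ∈ H`, the tuple `(b, h)` has a twin `(a', g)` in `G`. If `a'`
generates `G`, then `g = w(a')` for some word `w`, and transferring this formula back gives
`h = w(b)`.

That `a'` generates `G` is where finite presentability and the Hopf property enter. Writing
`a' = v(a)`, the formula "`x = v(y)` for some `y` satisfying `R`" holds of `a'`, hence of `a`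
(which has the same type): `a = v(c)` with `c` satisfying `R`. The endomorphism `θ : a ↦ c` of `G`
then maps `a'` to `a`, so it is surjective, hence injective, and `a'` generates `G`.
-/

open FirstOrder Language

attribute [local instance] grpStructure

namespace grpLang

variable {α β G : Type*} [Group G]

def oneTerm : grpLang.Term α := Term.func (L := grpLang) (l := 0) () ![]

def invTerm (t : grpLang.Term α) : grpLang.Term α := Term.func (L := grpLang) (l := 1) () ![t]

def mulTerm (t s : grpLang.Term α) : grpLang.Term α := Term.func (L := grpLang) (l := 2) () ![t, s]

@[simp]
theorem realize_oneTerm (v : α → G) : (oneTerm : grpLang.Term α).realize v = 1 := rfl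

@[simp]
theorem realize_invTerm (v : α → G) (t : grpLang.Term α) :
    (invTerm t).realize v = (t.realize v)⁻¹ := rfl

@[simp]
theorem realize_mulTerm (v : α → G) (t s : grpLang.Term α) :
    (mulTerm t s).realize v = t.realize v * s.realize v := rfl

def listTerm : List (α × Bool) → grpLang.Term α
  | [] => oneTerm
  | p :: L => mulTerm (cond p.2 (Term.var p.1) (invTerm (Term.var p.1))) (listTerm L)

theorem realize_listTerm (v : α → G) (L : List (α × Bool)) :
    (listTerm L).realize v = FreeGroup.lift v (FreeGroup.mk L) := by
  rw [FreeGroup.lift_mk]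
  induction L with
  | nil => rfl
  | cons p L ih =>
    obtain ⟨i, _ | _⟩ := p <;> simp [listTerm, ih]

def wordTerm [DecidableEq α] (w : FreeGroup α) : grpLang.Term α :=
  listTerm w.toWord

@[simp]
theorem realize_wordTerm [DecidableEq α] (v : α → G) (w : FreeGroup α) :
    (wordTerm w).realize v = FreeGroup.lift v w := by
  rw [wordTerm, realize_listTerm, FreeGroup.mk_toWord]

def wordEq [DecidableEq α] (u w : FreeGroup α) : grpLang.Formula α :=
  (wordTerm u).equal (wordTerm w)

@[simp]
theorem realize_wordEq [DecidableEq α] (x : α → G) (u w : FreeGroup α) :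
    (wordEq u w).Realize x ↔ FreeGroup.lift x u = FreeGroup.lift x w := by
  simp [wordEq]

noncomputable def imageOfSolution [Finite α] [Finite β] [DecidableEq β]
    (rels : Finset (FreeGroup β)) (v : α → FreeGroup β) : grpLang.Formula α :=
  Formula.iExs β <|
    (BoundedFormula.iInf fun r : rels => ((wordTerm r.1).relabel Sum.inr).equal oneTerm) ⊓
      BoundedFormula.iInf fun i => (Term.var (Sum.inl i)).equal ((wordTerm (v i)).relabel Sum.inr)

theorem realize_imageOfSolution [Finite α] [Finite β] [DecidableEq β]
    (rels : Finset (FreeGroup β)) (v : α → FreeGroup β) (x : α → G) :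
    (imageOfSolution rels v).Realize x ↔
      ∃ y : β → G, (∀ r ∈ rels, FreeGroup.lift y r = 1) ∧ ∀ i, x i = FreeGroup.lift y (v i) := by
  simp [imageOfSolution, Formula.Realize, Term.equal, Function.comp_def]

end grpLang

section GroupType

variable {G H : Type*} [Group G] [Group H] {n : ℕ}

theorem realize_iff_of_groupTypeOfTuple_eq {a : Fin n → G} {b : Fin n → H}
    (h : groupTypeOfTuple G a = groupTypeOfTuple H b) (φ : grpLang.Formula (Fin n)) :
    φ.Realize a ↔ φ.Realize b :=
  Set.ext_iff.mp h φ

theorem groupTypeOfTuple_init_eq {a : Fin (n + 1) → G} {b : Fin (n + 1) → H}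
    (h : groupTypeOfTuple G a = groupTypeOfTuple H b) :
    groupTypeOfTuple G (Fin.init a) = groupTypeOfTuple H (Fin.init b) := by
  ext φ
  have := realize_iff_of_groupTypeOfTuple_eq h (φ.relabel Fin.castSucc)
  rwa [Formula.realize_relabel, Formula.realize_relabel] at this

theorem ker_lift_eq_of_groupTypeOfTuple_eq {a : Fin n → G} {b : Fin n → H}
    (h : groupTypeOfTuple G a = groupTypeOfTuple H b) :
    (FreeGroup.lift a).ker = (FreeGroup.lift b).ker := by
  ext w
  simpa using realize_iff_of_groupTypeOfTuple_eq h (grpLang.wordEq w 1)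

theorem FreeGroup.lift_surjective_of_isotypic {a : Fin n → G} {b : Fin n → H}
    (hG : ∀ a' : Fin n → G, groupTypeOfTuple G a' = groupTypeOfTuple G a →
      Function.Surjective (FreeGroup.lift a'))
    (hH : ∀ d : Fin (n + 1) → H, ∃ c : Fin (n + 1) → G,
      groupTypeOfTuple G c = groupTypeOfTuple H d)
    (hab : groupTypeOfTuple G a = groupTypeOfTuple H b) :
    Function.Surjective (FreeGroup.lift b) := by
  intro h
  obtain ⟨c, hc⟩ := hH (Fin.snoc b h)
  have hcb : groupTypeOfTuple G (Fin.init c) = groupTypeOfTuple H b := by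
    simpa using groupTypeOfTuple_init_eq hc
  obtain ⟨w, hw⟩ := hG _ (hcb.trans hab.symm) (c (Fin.last n))
  have hcw := realize_iff_of_groupTypeOfTuple_eq hc
    ((Term.var (Fin.last n)).equal ((grpLang.wordTerm w).relabel Fin.castSucc))
  simp only [Formula.realize_equal, Term.realize_var, Term.realize_relabel, Function.comp_def,
    grpLang.realize_wordTerm, Fin.snoc_last, Fin.snoc_castSucc] at hcw
  exact ⟨w, (hcw.mp hw.symm).symm⟩

end GroupType

theorem nonempty_mulEquiv_of_ker_eq {F G H : Type*} [Group F] [Group G] [Group H]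
    {f : F →* G} {g : F →* H} (hf : Function.Surjective f) (hg : Function.Surjective g)
    (h : f.ker = g.ker) : Nonempty (G ≃* H) :=
  ⟨((QuotientGroup.quotientKerEquivOfSurjective f hf).symm.trans
    (QuotientGroup.quotientMulEquivOfEq h)).trans (QuotientGroup.quotientKerEquivOfSurjective g hg)⟩

theorem exists_comp_eq_of_ker_le {F G K : Type*} [Group F] [Group G] [Group K]
    {f : F →* G} (hf : Function.Surjective f) {g : F →* K} (h : f.ker ≤ g.ker) :
    ∃ θ : G →* K, θ.comp f = g :=
  ⟨f.liftOfSurjective hf ⟨g, h⟩, f.liftOfRightInverse_comp _ _ _⟩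

theorem FreeGroup.lift_surjective_of_groupTypeOfTuple_eq {G : Type*} [Group G] {n : ℕ}
    {rels : Finset (FreeGroup (Fin n))} {a a' : Fin n → G}
    (hhopf : ∀ f : G →* G, Function.Surjective f → Function.Injective f)
    (hsurj : Function.Surjective (FreeGroup.lift a))
    (hker : (FreeGroup.lift a).ker = Subgroup.normalClosure rels)
    (h : groupTypeOfTuple G a' = groupTypeOfTuple G a) :
    Function.Surjective (FreeGroup.lift a') := by
  choose v hv using fun i => hsurj (a' i)
  have ha_rels : ∀ r ∈ rels, FreeGroup.lift a r = 1 := fun r hr =>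
    (hker ▸ Subgroup.subset_normalClosure hr : r ∈ (FreeGroup.lift a).ker)
  obtain ⟨c, hc_rels, hac⟩ :
      ∃ c : Fin n → G, (∀ r ∈ rels, FreeGroup.lift c r = 1) ∧ ∀ i, a i = FreeGroup.lift c (v i) := by
    rw [← grpLang.realize_imageOfSolution, ← realize_iff_of_groupTypeOfTuple_eq h,
      grpLang.realize_imageOfSolution]
    exact ⟨a, ha_rels, fun i => (hv i).symm⟩
  obtain ⟨θ, hθ⟩ := exists_comp_eq_of_ker_le hsurj (g := FreeGroup.lift c)
    (hker ▸ Subgroup.normalClosure_le_normal hc_rels)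
  have hθa' : θ.comp (FreeGroup.lift a') = FreeGroup.lift a := by
    ext i
    simp [← hv i, ← hθ, hac]
  have hθa'_surj : Function.Surjective (θ ∘ FreeGroup.lift a') := by
    rw [← MonoidHom.coe_comp, hθa']
    exact hsurj
  exact hθa'_surj.of_comp_left (hhopf θ hθa'_surj.of_comp)

/-- **Isotypic rigidity of finitely presented Hopfian groups.**  If `G` is a finitely
presented group all of whose surjective endomorphisms are injective, then every group
isotypic to `G` is isomorphic to `G`. -/
theorem finitelyPresented_hopfian_isotypic_rigidity
    (G : Type*) [Group G]
    (hfp : ∃ (n : ℕ) (rels : Finset (FreeGroup (Fin n))),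
      Nonempty (G ≃* PresentedGroup (rels : Set (FreeGroup (Fin n)))))
    (hhopf : ∀ f : G →* G, Function.Surjective f → Function.Injective f)
    (H : Type*) [Group H] (h : GroupIsotypic G H) :
    Nonempty (G ≃* H) := by
  obtain ⟨n, rels, ⟨e⟩⟩ := hfp
  set a : Fin n → G := fun i => e.symm (PresentedGroup.of i)
  have hlift : FreeGroup.lift a = e.symm.toMonoidHom.comp (PresentedGroup.mk _) := by
    ext
    simp [a, PresentedGroup.of]
  have hsurj : Function.Surjective (FreeGroup.lift a) :=
    hlift ▸ e.symm.surjective.comp (PresentedGroup.mk_surjective _)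
  have hker : (FreeGroup.lift a).ker = Subgroup.normalClosure rels := by
    rw [hlift, MonoidHom.ker_comp_of_injective _ _ e.symm.injective]
    ext
    exact PresentedGroup.mk_eq_one_iff
  obtain ⟨b, hab⟩ := (h n).1 a
  refine nonempty_mulEquiv_of_ker_eq hsurj ?_ (ker_lift_eq_of_groupTypeOfTuple_eq hab)
  exact FreeGroup.lift_surjective_of_isotypic
    (fun _ ha' => FreeGroup.lift_surjective_of_groupTypeOfTuple_eq hhopf hsurj hker ha')
    (h (n + 1)).2 hab
end
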